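/- Let L be a positive integer and ε ∈ (0, 1/(2L)). Then there exist continuous functions d_l^{(c)}, d̃_l^{(c)} : (0,1] → [0,1] for c ∈ {0,1} and l ∈ {1,...,L}, each extending continuously by 0 at 0, such that: (a) ‖d̃_l^{(c)}(t)·t − (l/L)·d̃_l^{(c)}(t)‖_∞ < 1/L for all c,l; (b) d_l^{(c)}(t)·d̃_l^{(c)}(t) = d_l^{(c)}(t) for all t and all c,l; (c) d̃_l^{(c)}·d̃_{l'}^{(c)} = 0 whenever l ≠ l'; (e) sup_{t ∈ (0,1]} |t − Σ_{c=0}^{1} Σ_{l=1}^{L} (l/L)·d_l^{(c)}(t)| ≤ 1/L. -/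

import Mathlib

/-!
Rescale by `L`, so that the grid points `l / L` become the integers. Each `d_l` is a trapezoid
centred at `l` with plateau half-width `e = L ε` and support half-width `1 - e`; two consecutive
ones add up to `1` between their centres, so the `d_l` form a partition of unity on `[0, L]` and
`∑ (l / L) d_l(t)` is a convex combination of grid points lying within `1 / L` of `t`. Each `d̃_l`
is a wider trapezoid, equal to `1` on the support of `d_l` and vanishing off `(l - 1, l + 1)`,
which gives (a) and makes the `d̃_l` of one parity, whose centres are `2` apart, disjointly
supported.
-/

open Set Finset

noncomputable def ramp (a b y : ℝ) : ℝ := max 0 (min 1 ((y - a) / (b - a)))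

section Ramp

variable {a b : ℝ}

lemma ramp_nonneg (a b y : ℝ) : 0 ≤ ramp a b y := le_max_left _ _

lemma ramp_le_one (a b y : ℝ) : ramp a b y ≤ 1 := max_le zero_le_one (min_le_left _ _)

lemma ramp_of_le (hab : a ≤ b) {y : ℝ} (hy : y ≤ a) : ramp a b y = 0 :=
  max_eq_left <| (min_le_right _ _).trans <|
    div_nonpos_of_nonpos_of_nonneg (sub_nonpos.2 hy) (sub_nonneg.2 hab)

lemma ramp_of_ge (hab : a < b) {y : ℝ} (hy : b ≤ y) : ramp a b y = 1 := by
  rw [ramp, min_eq_left ((one_le_div (sub_pos.2 hab)).2 (by linarith)),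
    max_eq_right zero_le_one]

lemma continuous_ramp (a b : ℝ) : Continuous (ramp a b) := by
  unfold ramp; fun_prop

end Ramp

/-- The trapezoid equal to `1` on `[-a, a]` and to `0` off `(-b, b)`, written as a difference of
two ramps so that its integer translates telescope. -/
noncomputable def bump (a b x : ℝ) : ℝ := ramp (-b) (-a) x - ramp a b x

section Bump

variable {a b : ℝ}

lemma continuous_bump (a b : ℝ) : Continuous (bump a b) :=
  (continuous_ramp _ _).sub (continuous_ramp _ _)

lemma bump_le_one (a b x : ℝ) : bump a b x ≤ 1 := by
  rw [bump]
  linarith [ramp_le_one (-b) (-a) x, ramp_nonneg a b x]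

lemma bump_nonneg (ha : 0 ≤ a) (hab : a < b) (x : ℝ) : 0 ≤ bump a b x := by
  rcases le_or_gt x a with hx | hx
  · rw [bump, ramp_of_le hab.le hx, sub_zero]; exact ramp_nonneg _ _ _
  · rw [bump, ramp_of_ge (neg_lt_neg hab) (by linarith)]; linarith [ramp_le_one a b x]

lemma bump_mem_Icc (ha : 0 ≤ a) (hab : a < b) (x : ℝ) : bump a b x ∈ Icc (0 : ℝ) 1 :=
  ⟨bump_nonneg ha hab x, bump_le_one a b x⟩

lemma bump_eq_zero (ha : 0 ≤ a) (hab : a < b) {x : ℝ} (hx : b ≤ |x|) : bump a b x = 0 := by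
  rcases le_abs'.1 hx with hx | hx
  · rw [bump, ramp_of_le (neg_le_neg hab.le) (by linarith), ramp_of_le hab.le (by linarith),
      sub_zero]
  · rw [bump, ramp_of_ge (neg_lt_neg hab) (by linarith), ramp_of_ge hab hx, sub_self]

lemma abs_lt_of_bump_ne_zero (ha : 0 ≤ a) (hab : a < b) {x : ℝ} (hx : bump a b x ≠ 0) : |x| < b :=
  lt_of_not_ge fun h => hx (bump_eq_zero ha hab h)

lemma bump_eq_one (hab : a < b) {x : ℝ} (hx : |x| ≤ a) : bump a b x = 1 := by
  rw [bump, ramp_of_ge (neg_lt_neg hab) (neg_le_of_abs_le hx),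
    ramp_of_le hab.le (le_of_abs_le hx), sub_zero]

lemma bump_mul_abs_lt (ha : 0 ≤ a) (hab : a < b) (x : ℝ) : bump a b x * |x| < b := by
  by_cases hx : bump a b x = 0
  · rw [hx, zero_mul]; linarith
  · calc bump a b x * |x| ≤ 1 * |x| := by gcongr; exact bump_le_one a b x
      _ < b := by rw [one_mul]; exact abs_lt_of_bump_ne_zero ha hab hx

lemma bump_mul_bump_eq_zero (ha : 0 ≤ a) (hab : a < b) {x y : ℝ} (hxy : 2 * b ≤ |x - y|) :
    bump a b x * bump a b y = 0 := by
  by_contra h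
  have hx := abs_lt_of_bump_ne_zero ha hab (left_ne_zero_of_mul h)
  have hy := abs_lt_of_bump_ne_zero ha hab (right_ne_zero_of_mul h)
  linarith [abs_sub x y]

lemma bump_mul_bump_eq_left (ha : 0 ≤ a) (hab : a < b) {a' b' : ℝ} (ha'b' : a' < b') (hba' : b ≤ a') (x : ℝ) :
    bump a b x * bump a' b' x = bump a b x := by
  by_cases hx : bump a b x = 0
  · rw [hx, zero_mul]
  · rw [bump_eq_one ha'b'
      ((abs_lt_of_bump_ne_zero ha hab hx).le.trans hba'), mul_one]

end Bump

lemma bump_eq_ramp_sub_ramp (a x : ℝ) :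
    bump a (1 - a) x = ramp a (1 - a) (x + 1) - ramp a (1 - a) x := by
  simp only [bump, ramp]
  ring_nf

lemma sum_range_bump_sub {a : ℝ} (ha : 0 ≤ a) (ha' : a < 1 - a) {n : ℕ} {s : ℝ}
    (hs₀ : 0 ≤ s) (hsn : s ≤ n) :
    ∑ l ∈ range (n + 1), bump a (1 - a) (s - l) = 1 := by
  have htelescope : ∀ l : ℕ, bump a (1 - a) (s - l) =
      ramp a (1 - a) (s + 1 - l) - ramp a (1 - a) (s + 1 - (l + 1 : ℕ)) := by
    intro l
    rw [bump_eq_ramp_sub_ramp]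
    push_cast
    ring_nf
  simp_rw [htelescope, sum_range_sub' (fun l : ℕ => ramp a (1 - a) (s + 1 - l))]
  push_cast
  rw [ramp_of_ge ha' (by linarith), ramp_of_le ha'.le (by linarith), sub_zero]

lemma abs_sub_sum_mul_le {ι : Type*} (S : Finset ι) {w x : ι → ℝ} {s δ : ℝ}
    (hw : ∀ i ∈ S, 0 ≤ w i) (hsum : ∑ i ∈ S, w i = 1)
    (hx : ∀ i ∈ S, w i ≠ 0 → |s - x i| ≤ δ) :
    |s - ∑ i ∈ S, x i * w i| ≤ δ :=
  calc |s - ∑ i ∈ S, x i * w i| = |∑ i ∈ S, (s - x i) * w i| := by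
        simp_rw [sub_mul, sum_sub_distrib, ← mul_sum, hsum, mul_one]
    _ ≤ ∑ i ∈ S, |(s - x i) * w i| := abs_sum_le_sum_abs _ _
    _ ≤ ∑ i ∈ S, δ * w i := by
        refine sum_le_sum fun i hi => ?_
        rw [abs_mul, abs_of_nonneg (hw i hi)]
        by_cases hwi : w i = 0
        · simp [hwi]
        · exact mul_le_mul_of_nonneg_right (hx i hi hwi) (hw i hi)
    _ = δ := by rw [← mul_sum, hsum, mul_one]

/-- The function `d_l^{(c)}` of the construction: `bump a b` rescaled to centre `l / L`, and `0`
unless `l ≠ 0` has parity `c`. -/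
noncomputable def gridBump (L : ℕ) (a b : ℝ) (c : Fin 2) (l : ℕ) (t : ℝ) : ℝ :=
  if l % 2 = c.val ∧ l ≠ 0 then bump a b (L * t - l) else 0

section GridBump

variable {L : ℕ} {a b : ℝ}

lemma continuous_gridBump (L : ℕ) (a b : ℝ) (c : Fin 2) (l : ℕ) :
    Continuous (gridBump L a b c l) := by
  unfold gridBump
  split_ifs
  · exact (continuous_bump a b).comp (by fun_prop)
  · exact continuous_const

lemma gridBump_mem_Icc (ha : 0 ≤ a) (hab : a < b) (c : Fin 2) (l : ℕ) (t : ℝ) :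
    gridBump L a b c l t ∈ Icc (0 : ℝ) 1 := by
  unfold gridBump
  split_ifs
  · exact bump_mem_Icc ha hab _
  · exact ⟨le_rfl, zero_le_one⟩

lemma gridBump_zero (ha : 0 ≤ a) (hab : a < b) (hb : b ≤ 1) (c : Fin 2) (l : ℕ) :
    gridBump L a b c l 0 = 0 := by
  unfold gridBump
  split_ifs with hl
  · refine bump_eq_zero ha hab ?_
    have : (1 : ℝ) ≤ l := by exact_mod_cast Nat.one_le_iff_ne_zero.2 hl.2
    rw [mul_zero, zero_sub, abs_neg, Nat.abs_cast]
    linarith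
  · rfl

lemma sum_gridBump {l : ℕ} (hl : l ≠ 0) (t : ℝ) :
    ∑ c : Fin 2, gridBump L a b c l t = bump a b (L * t - l) := by
  rw [Fin.sum_univ_two]
  unfold gridBump
  rcases Nat.mod_two_eq_zero_or_one l with h | h <;> simp [h, hl]

lemma abs_gridBump_mul_sub_lt (hL : 0 < L) (ha : 0 ≤ a) (hab : a < b) (hb : b ≤ 1)
    (c : Fin 2) (l : ℕ) (t : ℝ) :
    |gridBump L a b c l t * t - (l / L : ℝ) * gridBump L a b c l t| < 1 / L := by
  have hL' : (0 : ℝ) < L := Nat.cast_pos.2 hL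
  unfold gridBump
  split_ifs
  · have hfactor : bump a b (L * t - l) * t - l / L * bump a b (L * t - l) =
        bump a b (L * t - l) * (L * t - l) / L := by
      field_simp
    rw [hfactor, abs_div, abs_mul, abs_of_nonneg (bump_nonneg ha hab _), abs_of_pos hL']
    exact div_lt_div_of_pos_right ((bump_mul_abs_lt ha hab _).trans_le hb) hL'
  · simpa using hL'

lemma gridBump_mul_gridBump_eq_left {a' b' : ℝ} (ha : 0 ≤ a) (hab : a < b) (ha'b' : a' < b')
    (hba' : b ≤ a') (c : Fin 2) (l : ℕ) (t : ℝ) :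
    gridBump L a b c l t * gridBump L a' b' c l t = gridBump L a b c l t := by
  unfold gridBump
  split_ifs
  · exact bump_mul_bump_eq_left ha hab ha'b' hba' _
  · exact zero_mul _

lemma gridBump_mul_gridBump_eq_zero (ha : 0 ≤ a) (hab : a < b) (hb : b ≤ 1) (c : Fin 2)
    {l l' : ℕ} (hll' : l ≠ l') (t : ℝ) :
    gridBump L a b c l t * gridBump L a b c l' t = 0 := by
  unfold gridBump
  split_ifs with hl hl'
  · refine bump_mul_bump_eq_zero ha hab ?_
    have hgap : l + 2 ≤ l' ∨ l' + 2 ≤ l := by omega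
    have hgap' : (2 : ℝ) ≤ |(l' : ℝ) - l| := by
      rcases hgap with h | h
      · have h' : (l : ℝ) + 2 ≤ l' := by exact_mod_cast h
        rw [abs_of_nonneg (by linarith)]
        linarith
      · have h' : (l' : ℝ) + 2 ≤ l := by exact_mod_cast h
        rw [abs_sub_comm, abs_of_nonneg (by linarith)]
        linarith
    rw [show L * t - l - (L * t - l') = (l' : ℝ) - l by ring]
    linarith
  all_goals simp

lemma abs_sub_sum_gridBump_le (hL : 0 < L) (ha : 0 ≤ a) (ha' : a < 1 - a) {t : ℝ}
    (ht : t ∈ Icc (0 : ℝ) 1) :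
    |t - ∑ c : Fin 2, ∑ l ∈ Icc 1 L, (l / L : ℝ) * gridBump L a (1 - a) c l t| ≤ 1 / L := by
  have hL' : (0 : ℝ) < L := Nat.cast_pos.2 hL
  have hsum : ∑ c : Fin 2, ∑ l ∈ Icc 1 L, (l / L : ℝ) * gridBump L a (1 - a) c l t =
      ∑ l ∈ range (L + 1), (l / L : ℝ) * bump a (1 - a) (L * t - l) := by
    have hsub : Finset.Icc 1 L ⊆ Finset.range (L + 1) := fun l hl => by simp at hl ⊢; omega
    rw [sum_comm, ← sum_subset hsub fun l hl hl' => ?_]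
    · exact sum_congr rfl fun l hl => by
        rw [← mul_sum, sum_gridBump (by simp at hl; omega)]
    · obtain rfl : l = 0 := by simp at hl hl'; omega
      simp
  rw [hsum]
  refine abs_sub_sum_mul_le _ (fun l _ => bump_nonneg ha ha' _)
    (sum_range_bump_sub ha ha' (by nlinarith [ht.1]) (by nlinarith [ht.2])) fun l _ hl => ?_
  have hclose := (abs_lt_of_bump_ne_zero ha ha' hl).le.trans (by linarith : 1 - a ≤ 1)
  rw [show L * t - l = L * (t - l / L) by field_simp, abs_mul, abs_of_pos hL'] at hclose
  rw [le_div_iff₀ hL']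
  linarith

end GridBump

theorem bump_functions_exist
    (L : ℕ) (hL : 0 < L) (ε : ℝ) (hε : 0 < ε) (hε' : ε < 1 / (2 * L)) :
    ∃ d dt : Fin 2 → ℕ → ℝ → ℝ,
      (∀ c l, Continuous (d c l) ∧ Continuous (dt c l)) ∧
      (∀ c l, d c l 0 = 0 ∧ dt c l 0 = 0) ∧
      (∀ c l t, t ∈ Ioc (0:ℝ) 1 → d c l t ∈ Icc (0:ℝ) 1 ∧ dt c l t ∈ Icc (0:ℝ) 1) ∧
      -- (a)
      (∀ c, ∀ l, 1 ≤ l → l ≤ L → ∀ t ∈ Ioc (0:ℝ) 1,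
        |dt c l t * t - (l / L : ℝ) * dt c l t| < 1 / L) ∧
      -- (b)
      (∀ c, ∀ l, 1 ≤ l → l ≤ L → ∀ t ∈ Ioc (0:ℝ) 1,
        d c l t * dt c l t = d c l t) ∧
      -- (c)
      (∀ c, ∀ l, 1 ≤ l → l ≤ L → ∀ l', 1 ≤ l' → l' ≤ L → l ≠ l' →
        ∀ t ∈ Ioc (0:ℝ) 1, dt c l t * dt c l' t = 0) ∧
      -- (e)
      (∀ t ∈ Ioc (0:ℝ) 1,
        |t - ∑ c : Fin 2, ∑ l ∈ Finset.Icc 1 L, (l / L : ℝ) * d c l t| ≤ 1 / L) := by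
  have hL' : (0 : ℝ) < L := Nat.cast_pos.2 hL
  set e : ℝ := L * ε
  have he : 0 < e := mul_pos hL' hε
  have he' : e < 1 - e := by
    have h2e : ε * (2 * L) < 1 := (lt_div_iff₀ (by positivity)).1 hε'
    linarith
  have he₀ : 0 ≤ 1 - e := by linarith
  have he₁ : 1 - e < 1 := by linarith
  refine ⟨gridBump L e (1 - e), gridBump L (1 - e) 1,
    fun c l => ⟨continuous_gridBump _ _ _ c l, continuous_gridBump _ _ _ c l⟩,
    fun c l => ⟨gridBump_zero he.le he' he₁.le c l, gridBump_zero he₀ he₁ le_rfl c l⟩,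
    fun c l t _ => ⟨gridBump_mem_Icc he.le he' c l t, gridBump_mem_Icc he₀ he₁ c l t⟩,
    fun c l _ _ t _ => abs_gridBump_mul_sub_lt hL he₀ he₁ le_rfl c l t,
    fun c l _ _ t _ => gridBump_mul_gridBump_eq_left he.le he' he₁ le_rfl c l t,
    fun c l _ _ l' _ _ hll' t _ => gridBump_mul_gridBump_eq_zero he₀ he₁ le_rfl c hll' t,
    fun t ht => abs_sub_sum_gridBump_le hL he.le he' (Ioc_subset_Icc_self ht)⟩
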